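/- Let R be a TRS and Π a set of forbidden patterns. Let π = ⟨u, o, λ⟩ ∈ Π be a stable pattern that matches the subterm s|_p of a term s (i.e., s|_p = uτ for some substitution τ) and thereby forbids a position p.q in s (i.e., p.q ∈ P_π(s) via this match at p). If s →_{R,Π} t by a step at a position p' with p' ∥ p.q or p' > p.q, then the position p.q is also forbidden in t. -/
import Mathlib


set_option autoImplicit false

namespace FP

/-- First-order terms over a signature `F` with arities `ar`; variables are naturals. -/
inductive Tm (F : Type) (ar : F → ℕ) : Type
  | var : ℕ → Tm F ar
  | app : (f : F) → (Fin (ar f) → Tm F ar) → Tm F ar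

variable {F : Type} {ar : F → ℕ}

/-- The subterm of `t` at position `p` (if `p` is a position of `t`). -/
def subtermAt : Tm F ar → List ℕ → Option (Tm F ar)
  | t, [] => some t
  | .var _, _ :: _ => none
  | .app f ts, i :: p => if h : i < ar f then subtermAt (ts ⟨i, h⟩) p else none

/-- Replacement `t[s]_p` (if `p` is a position of `t`). -/
def replaceAt : Tm F ar → List ℕ → Tm F ar → Option (Tm F ar)
  | _, [], s => some s
  | .var _, _ :: _, _ => none
  | .app f ts, i :: p, s =>
      if h : i < ar f then
        (replaceAt (ts ⟨i, h⟩) p s).map fun u => Tm.app f (Function.update ts ⟨i, h⟩ u)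
      else none

/-- Filling a context `(c, p)` (a term `c` together with a hole position `p`) with `s`,
i.e. `c[s]_p`. -/
def fill (c : Tm F ar) (p : List ℕ) (s : Tm F ar) : Tm F ar :=
  (replaceAt c p s).getD s

/-- `p ∈ Pos t`. -/
def IsPos (t : Tm F ar) (p : List ℕ) : Prop := (subtermAt t p).isSome

/-- Application of a substitution. -/
def subst (σ : ℕ → Tm F ar) : Tm F ar → Tm F ar
  | .var x => σ x
  | .app f ts => Tm.app f fun i => subst σ (ts i)

/-- The set of variables of a term. -/
def vars : Tm F ar → Set ℕ
  | .var x => {x}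
  | .app _ ts => ⋃ i, vars (ts i)

/-- A rewrite rule `lhs → rhs`. -/
structure Rule (F : Type) (ar : F → ℕ) where
  lhs : Tm F ar
  rhs : Tm F ar

/-- `R` is a TRS: left-hand sides are no variables und `Var(r) ⊆ Var(l)`. -/
def IsTRS (R : Set (Rule F ar)) : Prop :=
  ∀ r ∈ R, (∀ x, r.lhs ≠ Tm.var x) ∧ vars r.rhs ⊆ vars r.lhs

/-- `s →_R t` contracting the redex at position `p`. -/
def RewriteAt (R : Set (Rule F ar)) (p : List ℕ) (s t : Tm F ar) : Prop :=
  ∃ r ∈ R, ∃ σ : ℕ → Tm F ar,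
    subtermAt s p = some (subst σ r.lhs) ∧ replaceAt s p (subst σ r.rhs) = some t

/-- `p < q` : strict prefix of positions. -/
def StrictPrefix (p q : List ℕ) : Prop := p <+: q ∧ p ≠ q

/-- `p ∥ q` : parallel (incomparable) positions. -/
def Par (p q : List ℕ) : Prop := ¬ p <+: q ∧ ¬ q <+: p

/-- Flags of forbidden patterns: here / below / above. -/
inductive Flag : Type
  | h | b | a
deriving DecidableEq

/-- A forbidden pattern `⟨t, p, λ⟩`. -/
structure Pattern (F : Type) (ar : F → ℕ) where
  pat : Tm F ar
  pos : List ℕ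
  flag : Flag

/-- `q ∈ P_{t,p}(s)` : `q = o.p` for a match `s|_o = tσ`. -/
def PTP (t : Tm F ar) (p : List ℕ) (s : Tm F ar) (q : List ℕ) : Prop :=
  ∃ (o : List ℕ) (σ : ℕ → Tm F ar), subtermAt s o = some (subst σ t) ∧ q = o ++ p

/-- `o ∈ P_π(s)`. -/
def PPat (π : Pattern F ar) (s : Tm F ar) (o : List ℕ) : Prop :=
  match π.flag with
  | Flag.a => ∃ q, PTP π.pat π.pos s q ∧ StrictPrefix o q
  | Flag.b => ∃ q, PTP π.pat π.pos s q ∧ StrictPrefix q o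
  | Flag.h => PTP π.pat π.pos s o

/-- Position `o` is forbidden in `s` w.r.t. the pattern set `Pi`. -/
def Forbidden (Pi : Set (Pattern F ar)) (s : Tm F ar) (o : List ℕ) : Prop :=
  ∃ π ∈ Pi, PPat π s o

/-- A forbidden-pattern rewrite step at position `p` : an `R`-step at an allowed position. -/
def FPStepAt (R : Set (Rule F ar)) (Pi : Set (Pattern F ar)) (p : List ℕ)
    (s t : Tm F ar) : Prop :=
  RewriteAt R p s t ∧ ¬ Forbidden Pi s p

/-- `s →_{R,Π} t`. -/
def FPStep (R : Set (Rule F ar)) (Pi : Set (Pattern F ar)) (s t : Tm F ar) : Prop :=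
  ∃ p, FPStepAt R Pi p s t

/-- `R` is `Π`-terminating: there is no infinite `→_{R,Π}`-sequence. -/
def PiTerminating (R : Set (Rule F ar)) (Pi : Set (Pattern F ar)) : Prop :=
  ¬ ∃ f : ℕ → Tm F ar, ∀ n, FPStep R Pi (f n) (f (n + 1))

/-- The subterm of `w` at `p` is `Π`-terminating in its context: there is no infinite
`→_{R,Π}`-sequence from `w` with all steps at, below or parallel to `p` and
infinitely many steps at or below `p`. -/
def TermAtPos (R : Set (Rule F ar)) (Pi : Set (Pattern F ar)) (w : Tm F ar)
    (p : List ℕ) : Prop :=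
  ¬ ∃ (f : ℕ → Tm F ar) (q : ℕ → List ℕ),
      f 0 = w ∧ (∀ n, FPStepAt R Pi (q n) (f n) (f (n + 1))) ∧
      (∀ n, ¬ StrictPrefix (q n) p) ∧ (∀ m, ∃ n, m ≤ n ∧ p <+: q n)

/-- `s` is `Π`-terminating in the context `C[□]_p`. -/
def TermInCtx (R : Set (Rule F ar)) (Pi : Set (Pattern F ar)) (C : Tm F ar)
    (p : List ℕ) (s : Tm F ar) : Prop :=
  TermAtPos R Pi (fill C p s) p

/-- `s` is minimally non-`Π`-terminating in the context `C[□]_q` : `s` is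
non-`Π`-terminating in `C[□]_q` and every proper subterm `s|_p` is `Π`-terminating
in the context `C[s[□]_p]_q`. -/
def MinNonTerm (R : Set (Rule F ar)) (Pi : Set (Pattern F ar)) (C : Tm F ar)
    (q : List ℕ) (s : Tm F ar) : Prop :=
  ¬ TermInCtx R Pi C q s ∧
  ∀ p u, p ≠ [] → subtermAt s p = some u → TermAtPos R Pi (fill C q s) (q ++ p)

/-- Linearity of a term. -/
def Linear (t : Tm F ar) : Prop :=
  ∀ x p q, subtermAt t p = some (Tm.var x) → subtermAt t q = some (Tm.var x) → p = q

/-- The rule `r` overlaps the term `t` at (non-variable) position `p` :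
`r.lhs` and `t|_p` unify (for variable-disjoint terms: they have a common instance). -/
def OverlapsAt (r : Rule F ar) (t : Tm F ar) (p : List ℕ) : Prop :=
  ∃ u, subtermAt t p = some u ∧ (∃ f ts, u = Tm.app f ts) ∧
    ∃ σ τ : ℕ → Tm F ar, subst σ r.lhs = subst τ u

/-- Stability of a forbidden pattern w.r.t. `R`. -/
def StablePat (R : Set (Rule F ar)) (π : Pattern F ar) : Prop :=
  Linear π.pat ∧
  ((π.flag = Flag.b ∧ ∀ r ∈ R, ∀ p, Par p π.pos → ¬ OverlapsAt r π.pat p) ∨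
   (π.flag = Flag.h ∧
      ∀ r ∈ R, ∀ p, (Par p π.pos ∨ StrictPrefix π.pos p) → ¬ OverlapsAt r π.pat p))

/-- `Stb(Π)` : the stable patterns of `Π`. -/
def Stb (R : Set (Rule F ar)) (Pi : Set (Pattern F ar)) : Set (Pattern F ar) :=
  {π ∈ Pi | StablePat R π}

/-- `Π_orth` : the patterns of `Π` with flag `h` or `b`, linear, and not overlapped by
any rule of `R` at any position parallel to or below the pattern position. -/
def PiOrth (R : Set (Rule F ar)) (Pi : Set (Pattern F ar)) : Set (Pattern F ar) :=
  {π ∈ Pi | (π.flag = Flag.h ∨ π.flag = Flag.b) ∧ Linear π.pat ∧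
    ∀ r ∈ R, ∀ p, (Par p π.pos ∨ StrictPrefix π.pos p) → ¬ OverlapsAt r π.pat p}

/-! ### The extended signature with marked symbols and the token symbol `T` -/

/-- The extension of the signature `F` by a marked copy `f#` of each symbol and a
fresh token symbol `T`. -/
inductive ESym (F : Type) : Type
  | base : F → ESym F
  | mark : F → ESym F
  | token : ESym F

/-- Arities on the extended signature (the token symbol is unary). -/
def ear (ar : F → ℕ) : ESym F → ℕ
  | .base f => ar f
  | .mark f => ar f
  | .token => 1

/-- Terms over the extended signature. -/
abbrev ETm (F : Type) (ar : F → ℕ) : Type := Tm (ESym F) (ear ar)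

/-- Embedding of terms into the extended signature. -/
def embed : Tm F ar → ETm F ar
  | .var x => .var x
  | .app f ts => .app (ESym.base f) fun i => embed (ts i)

/-- `erase` : unmark all marked symbols and replace `T(s')` by `s'`. -/
def eraseT : ETm F ar → Tm F ar
  | .var x => .var x
  | .app (ESym.base f) ts => .app f fun i => eraseT (ts i)
  | .app (ESym.mark f) ts => .app f fun i => eraseT (ts i)
  | .app ESym.token ts => eraseT (ts ⟨0, Nat.one_pos⟩)

/-- Mark the root symbol of a term (`l#`). -/
def markRoot : Tm F ar → ETm F ar
  | .var x => .var x
  | .app f ts => .app (ESym.mark f) fun i => embed (ts i)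

/-- `T(u)`. -/
def tok (u : ETm F ar) : ETm F ar := Tm.app ESym.token fun _ => u

def embedRule (r : Rule F ar) : Rule (ESym F) (ear ar) := ⟨embed r.lhs, embed r.rhs⟩

def embedTRS (R : Set (Rule F ar)) : Set (Rule (ESym F) (ear ar)) := embedRule '' R

/-- A contextual rule `lhs → rhs [c]`, the context given as a term `ctx` over the
extended signature together with its hole position `cpos`. -/
structure CRule (F : Type) (ar : F → ℕ) where
  lhs : ETm F ar
  rhs : ETm F ar
  ctx : ETm F ar
  cpos : List ℕ

/-- `f` is a defined symbol of `R`. -/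
def Defined (R : Set (Rule F ar)) (f : F) : Prop :=
  ∃ r ∈ R, ∃ ts, r.lhs = Tm.app f ts

/-- `f` occurs in the right-hand side of some rule of `R`. -/
def OccursInRhs (R : Set (Rule F ar)) (f : F) : Prop :=
  ∃ r ∈ R, ∃ p ts, subtermAt r.rhs p = some (Tm.app f ts)

/-- `DP_c(R)` : the contextual dependency pairs
`l# → (r|_p)# [r[□]_p]` for `p` a position of `r` with defined root that is not
forbidden w.r.t. `Stb(Π)`. -/
def DPc (R : Set (Rule F ar)) (Pi : Set (Pattern F ar)) : Set (CRule F ar) :=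
  { c | ∃ r ∈ R, ∃ p u, subtermAt r.rhs p = some u ∧
      (∃ f ts, u = Tm.app f ts ∧ Defined R f) ∧
      ¬ Forbidden (Stb R Pi) r.rhs p ∧
      c = ⟨markRoot r.lhs, markRoot u, embed r.rhs, p⟩ }

/-- `V_c(R)` : the variable-descent pairs `l# → T(x) [r[□]_p]` for `r|_p = x ∈ Var`. -/
def Vc (R : Set (Rule F ar)) : Set (CRule F ar) :=
  { c | ∃ r ∈ R, ∃ p x, subtermAt r.rhs p = some (Tm.var x) ∧
      c = ⟨markRoot r.lhs, tok (Tm.var x), embed r.rhs, p⟩ }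

/-- `A_c(R)` : the activation pairs `T(f(x₁,…,x_k)) → f#(x₁,…,x_k) [□]` for
defined `f` occurring in some right-hand side. -/
def Ac (R : Set (Rule F ar)) : Set (CRule F ar) :=
  { c | ∃ f, Defined R f ∧ OccursInRhs R f ∧
      c = ⟨tok (Tm.app (ESym.base f) fun j => Tm.var j.val),
           Tm.app (ESym.mark f) fun j => Tm.var j.val,
           Tm.var 0, []⟩ }

/-- `S_c(R)` : the shift pairs `T(f(x₁,…,x_k)) → T(x_i) [f(x₁,…,□,…,x_k)]` for
`f` occurring in some right-hand side. -/
def Sc (R : Set (Rule F ar)) : Set (CRule F ar) :=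
  { c | ∃ f, OccursInRhs R f ∧ ∃ i : Fin (ar f),
      c = ⟨tok (Tm.app (ESym.base f) fun j => Tm.var j.val),
           tok (Tm.var i.val),
           Tm.app (ESym.base f) fun j => Tm.var j.val,
           [i.val]⟩ }

/-- `CDP(R)` : all (extended) contextual dependency pairs of `R` w.r.t. `Π`. -/
def CDP (R : Set (Rule F ar)) (Pi : Set (Pattern F ar)) : Set (CRule F ar) :=
  DPc R Pi ∪ Vc R ∪ Ac R ∪ Sc R

/-- No occurrence of the token symbol `T`. -/
def TokenFree (u : ETm F ar) : Prop :=
  ∀ (p : List ℕ) (ts : Fin (ear ar ESym.token) → ETm F ar),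
    subtermAt u p ≠ some (Tm.app ESym.token ts)

/-- The token symbol occurs at most at the root. -/
def TokenOnlyRoot (u : ETm F ar) : Prop :=
  TokenFree u ∨ ∃ w, u = tok w ∧ TokenFree w

/-- `(P, R, Π, T)` is an FP-CDP problem: the token symbol occurs only at the root of
left- and right-hand sides of `P` (and not in contexts). -/
def IsCDPProblem (P : Set (CRule F ar)) : Prop :=
  ∀ c ∈ P, TokenOnlyRoot c.lhs ∧ TokenOnlyRoot c.rhs ∧ TokenFree c.ctx

/-- `p_i'` : the accumulated hole positions `p_1.p_2.⋯.p_i` of a sequence of CDPs. -/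
def chainPos (α : ℕ → CRule F ar) : ℕ → List ℕ
  | 0 => []
  | n + 1 => chainPos α n ++ (α n).cpos

/-- One `→_P`-step with contextual rule `c` (read as `lhs → ctx[rhs]`) under
substitution `σ` at position `p` : from `s` to `t`. -/
def cStep (c : CRule F ar) (σ : ℕ → ETm F ar) (p : List ℕ) (s t : ETm F ar) : Prop :=
  subtermAt s p = some (subst σ c.lhs) ∧
  replaceAt s p (fill (subst σ c.ctx) c.cpos (subst σ c.rhs)) = some t

/-- A finite `→*_R`-segment of a chain from `u` to `v` : all steps at positions
not above-or-equal `p` and each step allowed (w.r.t. `Π`) in the erased term. -/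
def RSeg (R : Set (Rule F ar)) (Pi : Set (Pattern F ar)) (p : List ℕ)
    (u v : ETm F ar) : Prop :=
  ∃ (m : ℕ) (g : ℕ → ETm F ar) (q : ℕ → List ℕ), g 0 = u ∧ g m = v ∧
    ∀ k < m, RewriteAt (embedTRS R) (q k) (g k) (g (k + 1)) ∧
      ¬ q k <+: p ∧ ¬ Forbidden Pi (eraseT (g k)) (q k)

/-- Witness data for an infinite FP-CDP chain `α` of the problem `(P, R, Π, T)` :
a family of substitutions `σ` (the pairs are renamed apart) and the terms `A i`
(before the `i`-th `→_P`-step) and `B i` (after it). -/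
def ChainWitness (P : Set (CRule F ar)) (R : Set (Rule F ar)) (Pi : Set (Pattern F ar))
    (α : ℕ → CRule F ar) (σ : ℕ → ℕ → ETm F ar) (A B : ℕ → ETm F ar) : Prop :=
  (∀ i, α i ∈ P) ∧
  (∀ i, cStep (α i) (σ i) (chainPos α i) (A i) (B i)) ∧
  (∀ i, ¬ Forbidden Pi (eraseT (A i)) (chainPos α i)) ∧
  (∀ i, RSeg R Pi (chainPos α (i + 1)) (B i) (A (i + 1))) ∧
  (∀ i, (∃ ts, (α i).rhs = Tm.app ESym.token ts) → B i = A (i + 1))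

/-- `α` is an infinite FP-CDP chain of `(P, R, Π, T)`. -/
def IsChain (P : Set (CRule F ar)) (R : Set (Rule F ar)) (Pi : Set (Pattern F ar))
    (α : ℕ → CRule F ar) : Prop :=
  ∃ σ A B, ChainWitness P R Pi α σ A B

/-- The subterm of the extended term `w` at `p` is `Π`-terminating in its context
(w.r.t. `R`) : no infinite restricted reduction (allowedness checked on erased terms). -/
def TermAtPosE (R : Set (Rule F ar)) (Pi : Set (Pattern F ar)) (w : ETm F ar)
    (p : List ℕ) : Prop :=
  ¬ ∃ (f : ℕ → ETm F ar) (q : ℕ → List ℕ),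
      f 0 = w ∧
      (∀ n, RewriteAt (embedTRS R) (q n) (f n) (f (n + 1)) ∧
        ¬ Forbidden Pi (eraseT (f n)) (q n)) ∧
      (∀ n, ¬ StrictPrefix (q n) p) ∧ (∀ m, ∃ n, m ≤ n ∧ p <+: q n)

/-- Minimality of a chain: every subterm of `c_i'[t_iσ]_{p_i'}` strictly below `p_i'`
is `Π`-terminating in its context (w.r.t. `R`). -/
def MinCond (R : Set (Rule F ar)) (Pi : Set (Pattern F ar)) (α : ℕ → CRule F ar)
    (B : ℕ → ETm F ar) : Prop :=
  ∀ i q, StrictPrefix (chainPos α (i + 1)) q → IsPos (B i) q → TermAtPosE R Pi (B i) q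

/-- `α` is an infinite minimal FP-CDP chain of `(P, R, Π, T)`. -/
def IsMinChain (P : Set (CRule F ar)) (R : Set (Rule F ar)) (Pi : Set (Pattern F ar))
    (α : ℕ → CRule F ar) : Prop :=
  ∃ σ A B, ChainWitness P R Pi α σ A B ∧ MinCond R Pi α B

/-- Witness data for a finite FP-CDP chain `α 0, …, α (n-1)`. -/
def FinChainWitness (P : Set (CRule F ar)) (R : Set (Rule F ar)) (Pi : Set (Pattern F ar))
    (n : ℕ) (α : ℕ → CRule F ar) (σ : ℕ → ℕ → ETm F ar) (A B : ℕ → ETm F ar) : Prop :=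
  (∀ i < n, α i ∈ P) ∧
  (∀ i < n, cStep (α i) (σ i) (chainPos α i) (A i) (B i)) ∧
  (∀ i < n, ¬ Forbidden Pi (eraseT (A i)) (chainPos α i)) ∧
  (∀ i, i + 1 < n → RSeg R Pi (chainPos α (i + 1)) (B i) (A (i + 1))) ∧
  (∀ i, i + 1 < n → (∃ ts, (α i).rhs = Tm.app ESym.token ts) → B i = A (i + 1))

/-- `α 0, …, α (n-1)` is a finite FP-CDP chain of `(P, R, Π, T)`. -/
def IsFinChain (P : Set (CRule F ar)) (R : Set (Rule F ar)) (Pi : Set (Pattern F ar))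
    (n : ℕ) (α : ℕ → CRule F ar) : Prop :=
  ∃ σ A B, FinChainWitness P R Pi n α σ A B

/-- The FP-CDP problem `(P, R, Π, T)` is finite: no infinite minimal FP-CDP chain. -/
def FiniteProb (P : Set (CRule F ar)) (R : Set (Rule F ar)) (Pi : Set (Pattern F ar)) :
    Prop :=
  ¬ ∃ α : ℕ → CRule F ar, IsMinChain P R Pi α

/-- Nesting a list of contexts around an inner term:
`nest [(c₁,p₁),…,(c_n,p_n)] t = c₁[c₂[… c_n[t]_{p_n} …]_{p₂}]_{p₁}`. -/
def nest : List (Tm F ar × List ℕ) → Tm F ar → Tm F ar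
  | [], t => t
  | (c, p) :: rest, t => fill c p (nest rest t)

/-- `p_1.p_2.⋯.p_n` for the first `n` contexts of a sequence of CDPs. -/
def seqPos (β : ℕ → CRule F ar) (n : ℕ) : List ℕ :=
  (List.range n).foldr (fun i acc => (β i).cpos ++ acc) []

/-- The nested-context term `c_1[c_2[… c_n[erase(t_n)]_{p_n} …]_{p_2}]_{p_1}` of the
first `n` CDPs of a sequence. -/
def seqNest (β : ℕ → CRule F ar) (n : ℕ) : Tm F ar :=
  nest ((List.range n).map fun i => (eraseT (β i).ctx, (β i).cpos))
    (eraseT (β (n - 1)).rhs)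

/-- Reading a contextual rule `l → r [c]` as the plain rule `l → c[r]`. -/
def plainCRule (c : CRule F ar) : Rule (ESym F) (ear ar) :=
  ⟨c.lhs, fill c.ctx c.cpos c.rhs⟩

-- auxiliary lemmas

@[simp] lemma subtermAt_nil (t : Tm F ar) : subtermAt t [] = some t := by
  cases t <;> rfl

lemma prefix_antisymm' {a b : List ℕ} (h : a <+: b) (h2 : b <+: a) : a = b := by
  obtain ⟨c, rfl⟩ := h
  simpa using List.IsPrefix.length_le h2

lemma prefix_trichotomy (a b : List ℕ) : a <+: b ∨ b <+: a ∨ Par a b := by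
  by_cases h1 : a <+: b
  · exact Or.inl h1
  by_cases h2 : b <+: a
  · exact Or.inr (Or.inl h2)
  exact Or.inr (Or.inr ⟨h1, h2⟩)

lemma subtermAt_append (s : Tm F ar) (p q : List ℕ) :
    subtermAt s (p ++ q) = (subtermAt s p).bind (fun v => subtermAt v q) := by
  induction s generalizing p with
  | var x =>
    cases p with
    | nil => simp [subtermAt]
    | cons i p => simp [subtermAt]
  | app f ts ih =>
    cases p with
    | nil => simp [subtermAt]
    | cons i p =>
      simp only [List.cons_append, subtermAt]
      by_cases hi : i < ar f
      · rw [dif_pos hi, dif_pos hi]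
        exact ih _ p
      · rw [dif_neg hi, dif_neg hi]
        simp

lemma subtermAt_replaceAt_par {s t d : Tm F ar} {p' p : List ℕ}
    (h1 : ¬ p' <+: p) (h2 : ¬ p <+: p')
    (h : replaceAt s p' d = some t) : subtermAt t p = subtermAt s p := by
  induction s generalizing p' p t with
  | var x =>
    cases p' with
    | nil => exact absurd (List.nil_prefix) h1
    | cons i p'' => simp [replaceAt] at h
  | app f ts ih =>
    cases p' with
    | nil => exact absurd (List.nil_prefix) h1
    | cons i p'' =>
      cases p with
      | nil => exact absurd (List.nil_prefix) h2
      | cons j p₂ =>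
        simp only [replaceAt] at h
        by_cases hi : i < ar f
        swap
        · rw [dif_neg hi] at h; simp at h
        · rw [dif_pos hi] at h
          simp only [Option.map_eq_some_iff] at h
          obtain ⟨u, hu, rfl⟩ := h
          by_cases hij : i = j
          · subst hij
            have h1' : ¬ p'' <+: p₂ := fun hp => h1 (by simpa [List.cons_prefix_cons] using hp)
            have h2' : ¬ p₂ <+: p'' := fun hp => h2 (by simpa [List.cons_prefix_cons] using hp)
            simp only [subtermAt]
            rw [dif_pos hi, dif_pos hi, Function.update_self]
            exact ih _ h1' h2' hu
          · simp only [subtermAt]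
            by_cases hj : j < ar f
            · rw [dif_pos hj, dif_pos hj,
                Function.update_of_ne (by simp [Fin.ext_iff]; omega)]
            · rw [dif_neg hj, dif_neg hj]

lemma replaceAt_append {s d t : Tm F ar} {a b : List ℕ}
    (h : replaceAt s (a ++ b) d = some t) :
    ∃ v v', subtermAt s a = some v ∧ replaceAt v b d = some v' ∧ subtermAt t a = some v' := by
  induction a generalizing s t with
  | nil => exact ⟨s, t, by simp, h, by simp⟩
  | cons i a ih =>
    cases s with
    | var x => simp [replaceAt] at h
    | app f ts =>
      simp only [List.cons_append, replaceAt] at h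
      by_cases hi : i < ar f
      swap
      · rw [dif_neg hi] at h; simp at h
      · rw [dif_pos hi] at h
        simp only [Option.map_eq_some_iff] at h
        obtain ⟨u, hu, rfl⟩ := h
        obtain ⟨v, v', h1, h2, h3⟩ := ih hu
        refine ⟨v, v', ?_, h2, ?_⟩
        · simp only [subtermAt]
          rw [dif_pos hi]
          exact h1
        · simp only [subtermAt]
          rw [dif_pos hi, Function.update_self]
          exact h3

lemma subtermAt_subst {u v : Tm F ar} {w : List ℕ} (τ : ℕ → Tm F ar)
    (h : subtermAt u w = some v) :
    subtermAt (subst τ u) w = some (subst τ v) := by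
  induction u generalizing w with
  | var x =>
    cases w with
    | nil => simp at h; subst h; simp
    | cons i w => simp [subtermAt] at h
  | app f ts ih =>
    cases w with
    | nil => simp at h ⊢; subst h; rfl
    | cons i w =>
      simp only [subtermAt, subst] at h ⊢
      by_cases hi : i < ar f
      · rw [dif_pos hi] at h ⊢
        exact ih _ h
      · rw [dif_neg hi] at h; simp at h

lemma subst_pos_cases (τ : ℕ → Tm F ar) (u : Tm F ar) (w : List ℕ)
    (h : (subtermAt (subst τ u) w).isSome) :
    (∃ w1 w2 x, w = w1 ++ w2 ∧ subtermAt u w1 = some (Tm.var x)) ∨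
    (∃ f ts, subtermAt u w = some (Tm.app f ts)) := by
  induction u generalizing w with
  | var x => exact Or.inl ⟨[], w, x, rfl, rfl⟩
  | app f ts ih =>
    cases w with
    | nil => exact Or.inr ⟨f, ts, rfl⟩
    | cons i w =>
      simp only [subst, subtermAt] at h
      by_cases hi : i < ar f
      swap
      · rw [dif_neg hi] at h; simp at h
      · rw [dif_pos hi] at h
        rcases ih _ _ h with ⟨w1, w2, x, rfl, hv⟩ | ⟨f', ts', hv⟩
        · refine Or.inl ⟨i :: w1, w2, x, rfl, ?_⟩
          simp only [subtermAt]; rw [dif_pos hi]; exact hv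
        · refine Or.inr ⟨f', ts', ?_⟩
          simp only [subtermAt]; rw [dif_pos hi]; exact hv

lemma mem_vars_of_subtermAt {u : Tm F ar} {p : List ℕ} {x : ℕ}
    (h : subtermAt u p = some (Tm.var x)) : x ∈ vars u := by
  induction u generalizing p with
  | var y =>
    cases p with
    | nil => simp at h; simp [vars, h]
    | cons i p => simp [subtermAt] at h
  | app f ts ih =>
    cases p with
    | nil => simp at h
    | cons i p =>
      simp only [subtermAt] at h
      by_cases hi : i < ar f
      · rw [dif_pos hi] at h
        exact Set.mem_iUnion.2 ⟨⟨i, hi⟩, ih _ h⟩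
      · rw [dif_neg hi] at h; simp at h

lemma exists_pos_of_mem_vars {u : Tm F ar} {x : ℕ} (h : x ∈ vars u) :
    ∃ p, subtermAt u p = some (Tm.var x) := by
  induction u with
  | var y => simp [vars] at h; exact ⟨[], by simp [h]⟩
  | app f ts ih =>
    simp only [vars, Set.mem_iUnion] at h
    obtain ⟨i, hi⟩ := h
    obtain ⟨p, hp⟩ := ih i hi
    refine ⟨i.val :: p, ?_⟩
    simp only [subtermAt]
    rw [dif_pos i.isLt]
    simpa using hp

lemma subst_update_of_notMem_vars {u : Tm F ar} {x : ℕ} (d : Tm F ar) (τ : ℕ → Tm F ar)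
    (h : x ∉ vars u) : subst (Function.update τ x d) u = subst τ u := by
  induction u with
  | var y =>
    simp [vars] at h
    simp [subst, Function.update_of_ne (Ne.symm h)]
  | app f ts ih =>
    simp only [vars, Set.mem_iUnion, not_exists] at h
    simp only [subst]
    congr 1
    funext i
    exact ih i (h i)

lemma linear_child {f : F} {ts : Fin (ar f) → Tm F ar}
    (h : Linear (Tm.app f ts)) (i : Fin (ar f)) : Linear (ts i) := by
  intro x p q hp hq
  have key : ∀ r, subtermAt (ts i) r = some (Tm.var x) →
      subtermAt (Tm.app f ts) (i.val :: r) = some (Tm.var x) := by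
    intro r hr
    simp only [subtermAt]
    rw [dif_pos i.isLt]
    simpa using hr
  have := h x (i.val :: p) (i.val :: q) (key p hp) (key q hq)
  simpa using this

lemma replace_through_var (τ : ℕ → Tm F ar) (w1 : List ℕ) :
    ∀ (u : Tm F ar) (x : ℕ) (w2 : List ℕ) (d t' : Tm F ar),
    Linear u → subtermAt u w1 = some (Tm.var x) →
    replaceAt (subst τ u) (w1 ++ w2) d = some t' →
    ∃ d', t' = subst (Function.update τ x d') u := by
  induction w1 with
  | nil =>
    intro u x w2 d t' _ hsub hrep
    cases u with
    | var y =>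
      simp at hsub
      cases hsub
      exact ⟨t', by simp [subst]⟩
    | app f ts => simp at hsub
  | cons i w1 ih =>
    intro u x w2 d t' hlin hsub hrep
    cases u with
    | var y => simp [subtermAt] at hsub
    | app f ts =>
      simp only [subtermAt] at hsub
      by_cases hi : i < ar f
      swap
      · rw [dif_neg hi] at hsub; simp at hsub
      · rw [dif_pos hi] at hsub
        simp only [subst, List.cons_append, replaceAt] at hrep
        rw [dif_pos hi] at hrep
        simp only [Option.map_eq_some_iff] at hrep
        obtain ⟨u', hu', rfl⟩ := hrep
        obtain ⟨d', hd'⟩ := ih (ts ⟨i, hi⟩) x w2 d u' (linear_child hlin _) hsub hu'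
        refine ⟨d', ?_⟩
        simp only [subst]
        congr 1
        funext j
        by_cases hj : j = ⟨i, hi⟩
        · subst hj
          rw [Function.update_self, hd']
        · rw [Function.update_of_ne hj]
          refine (subst_update_of_notMem_vars _ _ ?_).symm
          intro hx
          obtain ⟨r, hr⟩ := exists_pos_of_mem_vars hx
          have h1 : subtermAt (Tm.app f ts) (j.val :: r) = some (Tm.var x) := by
            simp only [subtermAt]
            rw [dif_pos j.isLt]
            simpa using hr
          have h2 : subtermAt (Tm.app f ts) (i :: w1) = some (Tm.var x) := by
            simp only [subtermAt]
            rw [dif_pos hi]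
            exact hsub
          have := hlin x _ _ h1 h2
          apply hj
          simp at this
          exact Fin.ext this.1

/-- Lemma 2: if the stable pattern `π = ⟨u, o, λ⟩ ∈ Π` matches
`s|_p` (via `τ`) and thereby forbids the position `p.q` in `s`, and
`s →_{R,Π} t` at a position `p'` parallel to or strictly below `p.q`, then `p.q`
is also forbidden in `t`. -/
theorem stable_pattern_persists {F : Type} {ar : F → ℕ}
    (R : Set (Rule F ar)) (Pi : Set (Pattern F ar))
    (hR : IsTRS R)
    (hwf : ∀ π ∈ Pi, IsPos π.pat π.pos)
    (π : Pattern F ar) (hπ : π ∈ Pi) (hst : StablePat R π)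
    (s t : Tm F ar) (p pq p' : List ℕ) (τ : ℕ → Tm F ar)
    (hmatch : subtermAt s p = some (subst τ π.pat))
    (hforb : (π.flag = Flag.h ∧ pq = p ++ π.pos) ∨
             (π.flag = Flag.b ∧ StrictPrefix (p ++ π.pos) pq))
    (hpos : Par p' pq ∨ StrictPrefix pq p')
    (hstep : FPStepAt R Pi p' s t) :
    Forbidden Pi t pq := by
  obtain ⟨hrw, hallow⟩ := hstep
  obtain ⟨r, hr, σ, hsl, hrep⟩ := hrw
  have hpo : p ++ π.pos <+: pq := by
    rcases hforb with ⟨_, rfl⟩ | ⟨_, h⟩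
    · exact List.prefix_refl _
    · exact h.1
  have hppq : p <+: pq := (List.prefix_append p π.pos).trans hpo
  have hcontra : ¬ p' <+: pq := by
    intro hpre
    rcases hpos with ⟨h1, _⟩ | ⟨h1, h2⟩
    · exact h1 hpre
    · exact h2 (prefix_antisymm' h1 hpre)
  have hbuild : ∀ τ' : ℕ → Tm F ar,
      subtermAt t p = some (subst τ' π.pat) → Forbidden Pi t pq := by
    intro τ' ht
    refine ⟨π, hπ, ?_⟩
    rcases hforb with ⟨hf, rfl⟩ | ⟨hf, hsp⟩
    · simp only [PPat, hf]
      exact ⟨p, τ', ht, rfl⟩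
    · simp only [PPat, hf]
      exact ⟨p ++ π.pos, ⟨p, τ', ht, rfl⟩, hsp⟩
  rcases prefix_trichotomy p' p with hc | hc | hc
  · exact absurd (hc.trans hppq) hcontra
  · -- p <+: p'
    obtain ⟨w, rfl⟩ := hc
    have main : (Par w π.pos ∨ (π.flag = Flag.h ∧ StrictPrefix π.pos w)) →
        Forbidden Pi t pq := by
      intro H
      have hsub : subtermAt (subst τ π.pat) w = some (subst σ r.lhs) := by
        have h1 := subtermAt_append s p w
        rw [hsl, hmatch] at h1
        simp only [Option.bind_some] at h1
        exact h1.symm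
      rcases subst_pos_cases τ π.pat w (by simp [hsub]) with
        ⟨w1, w2, x, rfl, hvar⟩ | ⟨f', ts', happ⟩
      · -- rewrite below a variable of the pattern
        obtain ⟨v, v', h1, h2, h3⟩ := replaceAt_append hrep
        have hv : v = subst τ π.pat := by
          have := hmatch.symm.trans h1
          exact (Option.some.injEq _ _ ▸ this).symm
        subst hv
        obtain ⟨d', hd'⟩ :=
          replace_through_var τ w1 π.pat x w2 _ _ hst.1 hvar h2
        exact hbuild _ (by rw [h3, hd'])
      · -- overlap: contradiction with stability
        exfalso
        have hov : OverlapsAt r π.pat w := by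
          refine ⟨_, happ, ⟨f', ts', rfl⟩, σ, τ, ?_⟩
          have h1 := subtermAt_subst τ happ
          rw [hsub] at h1
          exact Option.some.injEq _ _ ▸ h1
        rcases hst.2 with ⟨hfb, hb⟩ | ⟨hfh, hh⟩
        · rcases H with hwpar | ⟨hfh, _⟩
          · exact hb r hr w ⟨hwpar.1, hwpar.2⟩ hov
          · rw [hfh] at hfb; cases hfb
        · rcases H with hwpar | ⟨_, hsw⟩
          · exact hh r hr w (Or.inl ⟨hwpar.1, hwpar.2⟩) hov
          · exact hh r hr w (Or.inr hsw) hov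
    rcases prefix_trichotomy w π.pos with hw | hw | hw
    · -- w <+: π.pos : contradiction
      obtain ⟨c, hc⟩ := hw
      have hpp : p ++ w <+: p ++ π.pos := ⟨c, by rw [List.append_assoc, hc]⟩
      exact absurd (hpp.trans hpo) hcontra
    · -- π.pos <+: w
      by_cases hwe : w = π.pos
      · subst hwe
        exact absurd hpo hcontra
      · rcases hforb with ⟨hf, hpq⟩ | ⟨hf, hsp⟩
        · exact main (Or.inr ⟨hf, hw, fun h => hwe h.symm⟩)
        · -- flag b : the step position was itself forbidden in s
          exfalso
          apply hallow
          refine ⟨π, hπ, ?_⟩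
          simp only [PPat, hf]
          refine ⟨p ++ π.pos, ⟨p, τ, hmatch, rfl⟩, ?_, ?_⟩
          · obtain ⟨c, rfl⟩ := hw
            exact ⟨c, by rw [List.append_assoc]⟩
          · intro h
            rw [List.append_cancel_left_eq] at h
            exact hwe h.symm
    · exact main (Or.inl hw)
  · -- Par p' p : the subterm at p is unchanged
    exact hbuild τ (by rw [subtermAt_replaceAt_par hc.1 hc.2 hrep, hmatch])


end FP
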